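/- arXiv:2602.21024 — 3 statements merged into one kernel-verified Lean document; each statement's English description precedes it below -/
import Mathlib

section
/- Let R be a commutative ring and let M, N be R-modules equipped with an R-linear map λ : M ⊗[R] N → R. Then the multiplication on M ⊗[R] N defined on pure tensors by (m ⊗ n) ⋆ (m' ⊗ n') = λ(m' ⊗ n) • (m ⊗ n') extends to a well-defined R-bilinear map and is associative, making M ⊗[R] N a (possibly non-unital) associative R-algebra. -/
open TensorProduct

/-- The multiplication `(m ⊗ n) ⋆ (m' ⊗ n') = λ(m' ⊗ n) • (m ⊗ n')` on `M ⊗[R] N`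
extends to a well-defined `R`-bilinear map which is associative. -/
theorem elementary_algebra_mul_exists_and_assoc
    (R : Type*) [CommRing R] (M N : Type*) [AddCommGroup M] [Module R M]
    [AddCommGroup N] [Module R N] (lam : M ⊗[R] N →ₗ[R] R) :
    ∃ mul : (M ⊗[R] N) →ₗ[R] (M ⊗[R] N) →ₗ[R] (M ⊗[R] N),
      (∀ (m m' : M) (n n' : N),
        mul (m ⊗ₜ[R] n) (m' ⊗ₜ[R] n') = lam (m' ⊗ₜ[R] n) • (m ⊗ₜ[R] n')) ∧
      (∀ a b c : M ⊗[R] N, mul (mul a b) c = mul a (mul b c)) := by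
  let inner : M → N → (M ⊗[R] N) →ₗ[R] (M ⊗[R] N) := fun m n =>
    TensorProduct.lift (LinearMap.mk₂ R (fun m' n' => lam (m' ⊗ₜ[R] n) • (m ⊗ₜ[R] n'))
      (by intro m₁ m₂ n'; rw [add_tmul, map_add, add_smul])
      (by intro c m' n'; rw [← smul_tmul', map_smul, smul_eq_mul, mul_smul])
      (by intro m' n₁ n₂; rw [tmul_add, smul_add])
      (by intro m' c n'; rw [tmul_smul, smul_comm]))
  have inner_apply : ∀ m n m' n',
      inner m n (m' ⊗ₜ[R] n') = lam (m' ⊗ₜ[R] n) • (m ⊗ₜ[R] n') := fun _ _ _ _ => rfl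
  let mul : (M ⊗[R] N) →ₗ[R] (M ⊗[R] N) →ₗ[R] (M ⊗[R] N) :=
    TensorProduct.lift (LinearMap.mk₂ R inner
      (by intro m₁ m₂ n; apply TensorProduct.ext'; intro m' n'
          rw [LinearMap.add_apply, inner_apply, inner_apply, inner_apply,
            add_tmul, smul_add])
      (by intro r m n; apply TensorProduct.ext'; intro m' n'
          rw [LinearMap.smul_apply, inner_apply, inner_apply, smul_comm, ← smul_tmul'])
      (by intro m n₁ n₂; apply TensorProduct.ext'; intro m' n'
          rw [LinearMap.add_apply, inner_apply, inner_apply, inner_apply,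
            tmul_add, map_add, add_smul])
      (by intro r m n; apply TensorProduct.ext'; intro m' n'
          rw [LinearMap.smul_apply, inner_apply, inner_apply, tmul_smul, map_smul,
            smul_eq_mul, mul_smul]))
  have mul_apply : ∀ m m' n n',
      mul (m ⊗ₜ[R] n) (m' ⊗ₜ[R] n') = lam (m' ⊗ₜ[R] n) • (m ⊗ₜ[R] n') :=
    fun _ _ _ _ => rfl
  refine ⟨mul, fun m m' n n' => mul_apply m m' n n', ?_⟩
  intro a b c
  induction a using TensorProduct.induction_on with
  | zero => simp
  | add x y hx hy => simp [map_add, hx, hy]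
  | tmul m n =>
    induction b using TensorProduct.induction_on with
    | zero => simp
    | add x y hx hy => simp [map_add, hx, hy]
    | tmul m' n' =>
      induction c using TensorProduct.induction_on with
      | zero => simp
      | add x y hx hy => simp [map_add, hx, hy]
      | tmul m'' n'' =>
        rw [mul_apply, map_smul, LinearMap.smul_apply, mul_apply, mul_apply,
          map_smul, mul_apply, smul_smul, smul_smul, mul_comm]
end

section
/- Let R be a commutative ring, M and N R-modules, and λ : M ⊗[R] N → R a surjective R-linear map. Then the multiplication map of the elementary algebra A = M ⊗^λ N is surjective, i.e., every element of A is an R-linear combination of products a ⋆ a' with a, a' ∈ A. -/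
open TensorProduct

/-- If `λ : M ⊗[R] N → R` is surjective, then the multiplication of the elementary
algebra `M ⊗^λ N` is surjective: the products span the whole algebra. -/
theorem elementary_algebra_mul_surjective
    (R : Type*) [CommRing R] (M N : Type*) [AddCommGroup M] [Module R M]
    [AddCommGroup N] [Module R N] (lam : M ⊗[R] N →ₗ[R] R)
    (hlam : Function.Surjective lam)
    (mul : (M ⊗[R] N) →ₗ[R] (M ⊗[R] N) →ₗ[R] (M ⊗[R] N))
    (hmul : ∀ (m m' : M) (n n' : N),
      mul (m ⊗ₜ[R] n) (m' ⊗ₜ[R] n') = lam (m' ⊗ₜ[R] n) • (m ⊗ₜ[R] n')) :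
    Submodule.span R {x : M ⊗[R] N | ∃ a a', x = mul a a'} = ⊤ := by
  obtain ⟨t, ht⟩ := hlam 1
  rw [eq_top_iff, ← TensorProduct.span_tmul_eq_top R M N, Submodule.span_le]
  rintro _ ⟨m, n, rfl⟩
  have key : ∀ x : M ⊗[R] N,
      lam x • (m ⊗ₜ[R] n) ∈ Submodule.span R {x : M ⊗[R] N | ∃ a a', x = mul a a'} := by
    intro x
    induction x using TensorProduct.induction_on with
    | zero => simp
    | tmul m' n' =>
        apply Submodule.subset_span
        exact ⟨m ⊗ₜ[R] n', m' ⊗ₜ[R] n, (hmul m m' n' n).symm⟩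
    | add x y hx hy =>
        rw [map_add, add_smul]
        exact Submodule.add_mem _ hx hy
  have := key t
  rwa [ht, one_smul] at this
end

section
/- Let R be a commutative von Neumann regular ring. Then every invertible R-module is isomorphic to R; equivalently, the Picard group of R is trivial. -/
open TensorProduct

/-- Over a von Neumann regular commutative ring, from any finite list of
(functional, vector) pairs one can produce a single functional and vector whose
pairing equals `d` times the sum of the pairings. -/
private lemma vnr_pick {R M : Type*} [CommRing R] [AddCommGroup M] [Module R M]
    (hR : ∀ a : R, ∃ b : R, a = a * b * a) :
    ∀ (l : List ((M →ₗ[R] R) × M)) (d : R),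
      ∃ (φ : M →ₗ[R] R) (x : M), φ x = d * (l.map fun p => p.1 p.2).sum := by
  intro l
  induction l with
  | nil => exact fun d => ⟨0, 0, by simp⟩
  | cons hd tl ih =>
    intro d
    obtain ⟨b, hb⟩ := hR (hd.1 hd.2)
    obtain ⟨φ', x', hφ'⟩ := ih ((1 - hd.1 hd.2 * b) * d)
    set a := hd.1 hd.2 with ha
    set s := (tl.map fun p => p.1 p.2).sum with hs
    refine ⟨(a * b * b) • hd.1 + (1 - a * b) • φ',
            (d * (a + s) * (a * b)) • hd.2 + (1 - a * b) • x', ?_⟩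
    have hu : hd.1 ((d * (a + s) * (a * b)) • hd.2 + (1 - a * b) • x')
        = d * (a + s) * (a * b) * a + (1 - a * b) * hd.1 x' := by
      rw [map_add, map_smul, map_smul, smul_eq_mul, smul_eq_mul, ← ha]
    have hv : φ' ((d * (a + s) * (a * b)) • hd.2 + (1 - a * b) • x')
        = d * (a + s) * (a * b) * φ' hd.2 + (1 - a * b) * ((1 - a * b) * d * s) := by
      rw [map_add, map_smul, map_smul, smul_eq_mul, smul_eq_mul, hφ']
    rw [List.map_cons, List.sum_cons, ← ha, ← hs, LinearMap.add_apply,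
      LinearMap.smul_apply, LinearMap.smul_apply, hu, hv, smul_eq_mul, smul_eq_mul]
    linear_combination (-(d * (a + s) * b + d +
      b * (d * (a + s) * a * b - (hd.1 x') * b - d * (a + s) * (φ' hd.2) +
        d * s * (2 - a * b)))) * hb

/-- If `e : M ⊗ N ≃ R` and `k ⊗ n` is sent to `0` for every `n`, then `k = 0`. -/
private lemma tmul_eq_zero_imp {R M N : Type*} [CommRing R]
    [AddCommGroup M] [Module R M] [AddCommGroup N] [Module R N]
    (e : (M ⊗[R] N) ≃ₗ[R] R) (k : M) (hk : ∀ n : N, e (k ⊗ₜ n) = 0) : k = 0 := by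
  -- The composite `Ψ : M ≃ M ⊗ R ≃ M ⊗ (M ⊗ N) ≃ (M ⊗ N) ⊗ M ≃ R ⊗ M ≃ M`
  -- is a linear isomorphism sending `k` to `0`.
  let ρ : (M ⊗[R] (M ⊗[R] N)) ≃ₗ[R] ((M ⊗[R] N) ⊗[R] M) :=
    (LinearEquiv.lTensor M (TensorProduct.comm R M N)) ≪≫ₗ
      (TensorProduct.assoc R M N M).symm
  let Ψ : M ≃ₗ[R] M :=
    (TensorProduct.rid R M).symm ≪≫ₗ (LinearEquiv.lTensor M e.symm) ≪≫ₗ ρ ≪≫ₗ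
      (LinearEquiv.rTensor M e) ≪≫ₗ (TensorProduct.lid R M)
  have hψ : Ψ k = 0 := by
    have h1 : (LinearEquiv.lTensor M e.symm) ((TensorProduct.rid R M).symm k)
        = k ⊗ₜ e.symm 1 := by
      simp
    -- the linear map `z ↦ (rTensor e) (ρ (k ⊗ z))` is zero
    let L : (M ⊗[R] N) →ₗ[R] (R ⊗[R] M) :=
      ((LinearEquiv.rTensor M e).toLinearMap.comp ρ.toLinearMap).comp
        (TensorProduct.mk R M (M ⊗[R] N) k)
    have hL : L = 0 := by
      apply TensorProduct.ext'
      intro x y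
      have : ρ (k ⊗ₜ (x ⊗ₜ y)) = (k ⊗ₜ y) ⊗ₜ x := by
        simp [ρ]
      simp only [L, LinearMap.comp_apply, TensorProduct.mk_apply, this,
        LinearEquiv.coe_coe, LinearEquiv.rTensor, TensorProduct.congr_tmul,
        LinearEquiv.refl_apply, hk y, LinearMap.zero_apply]
      simp
    have : Ψ k = (TensorProduct.lid R M) (L (e.symm 1)) := by
      simp only [Ψ, LinearEquiv.trans_apply, h1, L, LinearMap.comp_apply,
        TensorProduct.mk_apply]
      rfl
    rw [this, hL]
    simp
  have := Ψ.injective (a₁ := k) (a₂ := 0) (by simpa using hψ)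
  simpa using this

/-- Over a commutative von Neumann regular ring, every invertible module is
isomorphic to `R`: the Picard group is trivial. -/
theorem vonNeumannRegular_invertible_module_free
    (R : Type*) [CommRing R] (hR : ∀ a : R, ∃ b : R, a = a * b * a)
    (M N : Type*) [AddCommGroup M] [Module R M] [AddCommGroup N] [Module R N]
    (e : (M ⊗[R] N) ≃ₗ[R] R) :
    Nonempty (M ≃ₗ[R] R) := by
  classical
  -- write `e.symm 1` as a finite sum of simple tensors
  obtain ⟨S, hS⟩ := TensorProduct.exists_finset (e.symm 1)
  -- the functionals `x ↦ e (x ⊗ y)`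
  let Λ : N → (M →ₗ[R] R) := fun y =>
    e.toLinearMap.comp ((TensorProduct.mk R M N).flip y)
  -- `1` is the sum of the values `Λ p.2 p.1` over `S`
  have hone : (((S.toList.map fun p => (Λ p.2, p.1)).map fun q => q.1 q.2).sum) = 1 := by
    have : ((S.toList.map fun p => (Λ p.2, p.1)).map fun q => q.1 q.2)
        = S.toList.map fun p => e (p.1 ⊗ₜ p.2) := by
      simp [Λ, List.map_map, Function.comp_def]
    rw [this]
    have h2 : (S.toList.map fun p => e (p.1 ⊗ₜ[R] p.2)).sum
        = S.sum fun p => e (p.1 ⊗ₜ[R] p.2) := Finset.sum_map_toList S _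
    rw [h2, ← map_sum, ← hS]
    simp
  -- von Neumann regularity: find a single functional and vector pairing to 1
  obtain ⟨φ, m₀, hφ⟩ := vnr_pick hR (S.toList.map fun p => (Λ p.2, p.1)) 1
  rw [hone, mul_one] at hφ
  -- the "projection to N" map
  let p : (M ⊗[R] N) →ₗ[R] N :=
    TensorProduct.lift ((LinearMap.lsmul R N).comp φ)
  have hp : ∀ (m : M) (n : N), p (m ⊗ₜ n) = φ m • n := fun m n => rfl
  -- the section `N → M ⊗ N`, `n ↦ m₀ ⊗ n`
  let ι : N →ₗ[R] (M ⊗[R] N) := TensorProduct.mk R M N m₀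
  have hpι : ∀ n : N, p (ι n) = n := by
    intro n
    simp only [ι, TensorProduct.mk_apply, hp, hφ, one_smul]
  -- the scalar `f`
  set f : R := e (ι (p (e.symm 1))) with hf
  have hg : ∀ r : R, e (ι (p (e.symm r))) = r * f := by
    intro r
    have : e.symm r = r • e.symm 1 := by
      rw [← map_smul, smul_eq_mul, mul_one]
    rw [this, map_smul, map_smul, map_smul, smul_eq_mul]
  -- every `n : N` satisfies `f • n = n`
  have hθinj : ∀ n : N, e (m₀ ⊗ₜ n) = 0 → n = 0 := by
    intro n hn
    have : p (e.symm (e (ι n))) = n := by rw [e.symm_apply_apply, hpι]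
    rw [show e (ι n) = e (m₀ ⊗ₜ n) from rfl, hn] at this
    simp at this
    exact this.symm
  have hfn : ∀ n : N, f • n = n := by
    intro n
    have h1 : e (ι (p (e.symm (e (ι n))))) = e (ι n) * f := hg (e (ι n))
    rw [e.symm_apply_apply, hpι] at h1
    -- h1 : e (ι n) = e (ι n) * f
    have h2 : e (m₀ ⊗ₜ (n - f • n)) = 0 := by
      have : (m₀ ⊗ₜ (n - f • n) : M ⊗[R] N) = ι n - f • ι n := by
        simp [ι, TensorProduct.tmul_sub, TensorProduct.tmul_smul]
      rw [this, map_sub, map_smul, smul_eq_mul, mul_comm, ← h1, sub_self]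
    have := hθinj _ h2
    rw [sub_eq_zero] at this
    exact this.symm
  -- hence `f = 1`
  have hsmul : ∀ z : M ⊗[R] N, f • z = z := by
    intro z
    induction z with
    | zero => simp
    | tmul m n => rw [← TensorProduct.tmul_smul, hfn]
    | add x y hx hy => rw [smul_add, hx, hy]
  have hf1 : f = 1 := by
    have : f • e.symm (1 : R) = e.symm 1 := hsmul _
    have h2 := congrArg e this
    rw [map_smul, e.apply_symm_apply, smul_eq_mul, mul_one] at h2
    exact h2
  -- `φ` is injective
  have hinj : Function.Injective φ := by
    intro x y hxy
    have hk : φ (x - y) = 0 := by rw [map_sub, hxy, sub_self]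
    have hz : ∀ n : N, e ((x - y) ⊗ₜ n) = 0 := by
      intro n
      have h1 : e (ι (p (e.symm (e ((x - y) ⊗ₜ n))))) = e ((x - y) ⊗ₜ n) * f :=
        hg _
      rw [e.symm_apply_apply, hp, hk, zero_smul, map_zero, map_zero] at h1
      rw [hf1, mul_one] at h1
      exact h1.symm
    have := tmul_eq_zero_imp e (x - y) hz
    rwa [sub_eq_zero] at this
  -- `φ` is surjective
  have hsurj : Function.Surjective φ := by
    intro r
    exact ⟨r • m₀, by rw [map_smul, hφ, smul_eq_mul, mul_one]⟩
  exact ⟨LinearEquiv.ofBijective φ ⟨hinj, hsurj⟩⟩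
end
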